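/- arXiv:1408.3850 — 2 statements merged into one kernel-verified Lean document; each statement's English description precedes it below -/
import Mathlib

section
/- For every integer d ≥ 2, ∫_0^∞ f_d(t) dt = 2·∫_0^1 f_d(t) dt = 2·∫_1^∞ f_d(t) dt. -/
open Finset MeasureTheory

/-- `M d t = ∑_{k=0}^{d-1} C(d-1,k)² t^{2k}`. -/
noncomputable def M (d : ℕ) (t : ℝ) : ℝ :=
  ∑ k ∈ Finset.range d, ((d - 1).choose k : ℝ) ^ 2 * t ^ (2 * k)

/-- `A d t = ∑_{k=1}^{d-1} k² C(d-1,k)² t^{2(k-1)}`. -/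
noncomputable def A (d : ℕ) (t : ℝ) : ℝ :=
  ∑ k ∈ Finset.Icc 1 (d - 1), (k : ℝ) ^ 2 * ((d - 1).choose k : ℝ) ^ 2 * t ^ (2 * (k - 1))

/-- `B d t = ∑_{k=1}^{d-1} k C(d-1,k)² t^{2k-1}`. -/
noncomputable def B (d : ℕ) (t : ℝ) : ℝ :=
  ∑ k ∈ Finset.Icc 1 (d - 1), (k : ℝ) * ((d - 1).choose k : ℝ) ^ 2 * t ^ (2 * k - 1)

/-- The density `f d t = (1/π)·√(A_d(t)·M_d(t) − B_d(t)²) / M_d(t)`. -/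
noncomputable def f (d : ℕ) (t : ℝ) : ℝ :=
  (1 / Real.pi) * Real.sqrt (A d t * M d t - (B d t) ^ 2) / M d t

/-- The coefficients `a_k`. -/
noncomputable def a (d k : ℕ) : ℝ :=
  (∑ i ∈ Finset.range d, ∑ j ∈ Finset.range (d - 1),
      if i + j = k then ((d - 1).choose i : ℝ) ^ 2 * ((d - 2).choose j : ℝ) ^ 2 else 0)
  - (∑ i ∈ Finset.range (d - 1), ∑ j ∈ Finset.range (d - 1),
      if i + j + 1 = k then
        ((d - 2).choose i : ℝ) * ((d - 1).choose (i + 1) : ℝ) *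
          ((d - 2).choose j : ℝ) * ((d - 1).choose (j + 1) : ℝ)
      else 0)

/-!
With `n = d - 1`, the functions `M`, `t B` and `t² A` are `∑ w(k) C(n,k)² t^{2k}` for the weights
`w(k) = 1, k, k²`. Reversing the index `k ↦ n - k` (using `C(n,k) = C(n,n-k)`) shows that at `1/t`
they become `t^{-2n}` times `M`, `n M - t B` and `n² M - 2n t B + t² A`, and the discriminant
`A M - B²` is invariant under this triangular change up to the factor `t⁴ / t^{4n}`. Hence
`f (1/t) = t² f t`, so the substitution `t ↦ 1/t` carries `∫₀¹ f` to `∫₁^∞ f`.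
-/

theorem sum_range_inv_pow_mul_pow {K : Type*} [Field K] (n : ℕ) (c : ℕ → K) {x : K} (hx : x ≠ 0) :
    (∑ k ∈ range (n + 1), c k * x⁻¹ ^ k) * x ^ n = ∑ k ∈ range (n + 1), c (n - k) * x ^ k := by
  rw [sum_mul, ← sum_range_reflect]
  refine sum_congr rfl fun k hk => ?_
  have hkn : k ≤ n := Nat.lt_succ_iff.mp (mem_range.mp hk)
  rw [Nat.add_sub_cancel, ← Nat.add_sub_cancel' hkn, pow_add, inv_pow, Nat.add_sub_cancel_left]
  field_simp

theorem sum_range_succ_eq_sum_Icc_one {R : Type*} [AddCommMonoid R] (m : ℕ) {g : ℕ → R}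
    (hg : g 0 = 0) : ∑ k ∈ range (m + 1), g k = ∑ k ∈ Icc 1 m, g k := by
  rw [Nat.range_succ_eq_Icc_zero, ← insert_Icc_add_one_left_eq_Icc m.zero_le,
    sum_insert (by simp), hg, zero_add, zero_add]

theorem M_eq_sum {d : ℕ} (hd : 0 < d) (t : ℝ) :
    M d t = ∑ k ∈ range (d - 1 + 1), ((d - 1).choose k : ℝ) ^ 2 * (t ^ 2) ^ k := by
  simp only [M, Nat.sub_add_cancel hd, pow_mul]

theorem mul_B_eq_sum (d : ℕ) (t : ℝ) :
    t * B d t = ∑ k ∈ range (d - 1 + 1), (k * ((d - 1).choose k : ℝ) ^ 2) * (t ^ 2) ^ k := by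
  rw [sum_range_succ_eq_sum_Icc_one _ (by simp), B, mul_sum]
  refine sum_congr rfl fun k hk => ?_
  have hk1 : 1 ≤ k := (mem_Icc.mp hk).1
  rw [← pow_mul, mul_left_comm, ← pow_succ', Nat.sub_add_cancel (by omega)]

theorem sq_mul_A_eq_sum (d : ℕ) (t : ℝ) :
    t ^ 2 * A d t =
      ∑ k ∈ range (d - 1 + 1), (k ^ 2 * ((d - 1).choose k : ℝ) ^ 2) * (t ^ 2) ^ k := by
  rw [sum_range_succ_eq_sum_Icc_one _ (by simp), A, mul_sum]
  refine sum_congr rfl fun k hk => ?_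
  have hk1 : 1 ≤ k := (mem_Icc.mp hk).1
  rw [← pow_mul, mul_left_comm, ← pow_add, (by omega : 2 + 2 * (k - 1) = 2 * k)]

section Reflection

variable {d : ℕ} (hd : 0 < d) {t : ℝ} (ht : t ≠ 0)
include hd ht

theorem M_inv_mul_pow : M d t⁻¹ * (t ^ 2) ^ (d - 1) = M d t := by
  rw [M_eq_sum hd, M_eq_sum hd, inv_pow, sum_range_inv_pow_mul_pow _ _ (pow_ne_zero 2 ht)]
  refine sum_congr rfl fun k hk => ?_
  rw [Nat.choose_symm (Nat.lt_succ_iff.mp (mem_range.mp hk))]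

theorem inv_mul_B_inv_mul_pow :
    t⁻¹ * B d t⁻¹ * (t ^ 2) ^ (d - 1) = (d - 1 : ℕ) * M d t - t * B d t := by
  rw [mul_B_eq_sum, M_eq_sum hd, mul_B_eq_sum, inv_pow,
    sum_range_inv_pow_mul_pow _ _ (pow_ne_zero 2 ht), mul_sum, ← sum_sub_distrib]
  refine sum_congr rfl fun k hk => ?_
  have hk : k ≤ d - 1 := Nat.lt_succ_iff.mp (mem_range.mp hk)
  rw [Nat.choose_symm hk, Nat.cast_sub hk]
  ring

theorem inv_sq_mul_A_inv_mul_pow :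
    t⁻¹ ^ 2 * A d t⁻¹ * (t ^ 2) ^ (d - 1) =
      ((d - 1 : ℕ) : ℝ) ^ 2 * M d t - 2 * (d - 1 : ℕ) * (t * B d t) + t ^ 2 * A d t := by
  rw [sq_mul_A_eq_sum, M_eq_sum hd, mul_B_eq_sum, sq_mul_A_eq_sum, inv_pow,
    sum_range_inv_pow_mul_pow _ _ (pow_ne_zero 2 ht), mul_sum, mul_sum, ← sum_sub_distrib,
    ← sum_add_distrib]
  refine sum_congr rfl fun k hk => ?_
  have hk : k ≤ d - 1 := Nat.lt_succ_iff.mp (mem_range.mp hk)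
  rw [Nat.choose_symm hk, Nat.cast_sub hk]
  ring

theorem disc_inv_mul_pow :
    (A d t⁻¹ * M d t⁻¹ - B d t⁻¹ ^ 2) * ((t ^ 2) ^ (d - 1)) ^ 2 =
      t ^ 4 * (A d t * M d t - B d t ^ 2) := by
  have h := congr($(inv_sq_mul_A_inv_mul_pow hd ht) * $(M_inv_mul_pow hd ht) -
    $(inv_mul_B_inv_mul_pow hd ht) ^ 2)
  have hu : t⁻¹ * t = 1 := inv_mul_cancel₀ ht
  linear_combination t ^ 2 * h -
    ((t ^ 2) ^ (d - 1)) ^ 2 * (A d t⁻¹ * M d t⁻¹ - B d t⁻¹ ^ 2) * (t⁻¹ * t + 1) * hu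

end Reflection

theorem M_pos {d : ℕ} (hd : 0 < d) (t : ℝ) : 0 < M d t := by
  rw [M_eq_sum hd, sum_range_succ']
  simp only [Nat.choose_zero_right, Nat.cast_one, one_pow, pow_zero, mul_one]
  positivity

theorem continuous_f {d : ℕ} (hd : 0 < d) : Continuous (f d) := by
  have hM : Continuous (M d) := by unfold M; fun_prop
  have hA : Continuous (A d) := by unfold A; fun_prop
  have hB : Continuous (B d) := by unfold B; fun_prop
  exact (continuous_const.mul ((hA.mul hM).sub (hB.pow 2)).sqrt).div hM fun t => (M_pos hd t).ne'

theorem f_inv {d : ℕ} (hd : 0 < d) {t : ℝ} (ht : 0 < t) : f d t⁻¹ = t ^ 2 * f d t := by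
  have hP : 0 < (t ^ 2) ^ (d - 1) := by positivity
  have hM : M d t⁻¹ = M d t / (t ^ 2) ^ (d - 1) := by
    rw [eq_div_iff hP.ne', M_inv_mul_pow hd ht.ne']
  have hD : A d t⁻¹ * M d t⁻¹ - B d t⁻¹ ^ 2 =
      (t ^ 2 / (t ^ 2) ^ (d - 1)) ^ 2 * (A d t * M d t - B d t ^ 2) := by
    rw [div_pow, div_mul_eq_mul_div, eq_div_iff (pow_ne_zero 2 hP.ne'), disc_inv_mul_pow hd ht.ne']
    ring
  rw [f, f, hD, hM, Real.sqrt_mul (sq_nonneg _), Real.sqrt_sq (by positivity)]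
  field_simp [(M_pos hd t).ne']

section InvSymmetric

variable {E : Type*} [NormedAddCommGroup E] [NormedSpace ℝ E] {g : ℝ → E}

theorem image_inv_Ioi_one : (fun x : ℝ => x⁻¹) '' Set.Ioi 1 = Set.Ioo 0 1 := by
  open scoped Pointwise in rw [Set.image_inv_eq_inv, Set.inv_Ioi₀ one_pos, inv_one]

theorem hasDerivWithinAt_inv_Ioi_one {x : ℝ} (hx : x ∈ Set.Ioi 1) :
    HasDerivWithinAt (fun x : ℝ => x⁻¹) (-(x ^ 2)⁻¹) (Set.Ioi 1) x :=
  (hasDerivAt_inv (zero_lt_one.trans hx).ne').hasDerivWithinAt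

theorem integral_Ioo_zero_one_eq_integral_Ioi_one_comp_inv (h : ℝ → E) :
    ∫ x in Set.Ioo 0 1, h x = ∫ x in Set.Ioi 1, (x ^ 2)⁻¹ • h x⁻¹ := by
  rw [← image_inv_Ioi_one, integral_image_eq_integral_abs_deriv_smul measurableSet_Ioi
    (fun x => hasDerivWithinAt_inv_Ioi_one) inv_injective.injOn]
  simp_rw [abs_neg, abs_inv, abs_sq]

theorem integrableOn_Ioo_zero_one_iff_comp_inv (h : ℝ → E) :
    IntegrableOn h (Set.Ioo 0 1) ↔ IntegrableOn (fun x => (x ^ 2)⁻¹ • h x⁻¹) (Set.Ioi 1) := by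
  rw [← image_inv_Ioi_one, integrableOn_image_iff_integrableOn_abs_deriv_smul measurableSet_Ioi
    (fun x => hasDerivWithinAt_inv_Ioi_one) inv_injective.injOn]
  simp_rw [abs_neg, abs_inv, abs_sq]

theorem eqOn_inv_sq_smul_comp_inv (hg : ∀ t, 0 < t → g t⁻¹ = t ^ 2 • g t) :
    Set.EqOn (fun x => (x ^ 2)⁻¹ • g x⁻¹) g (Set.Ioi 0) := fun x hx => by
  dsimp only
  rw [hg x hx, inv_smul_smul₀ (pow_ne_zero 2 (ne_of_gt hx))]

theorem integral_Ioi_zero_eq_two_smul_of_inv (hg : ∀ t, 0 < t → g t⁻¹ = t ^ 2 • g t)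
    (hint : IntegrableOn g (Set.Ioc 0 1)) :
    ∫ t in Set.Ioi 0, g t = (2 : ℝ) • ∫ t in (0 : ℝ)..1, g t ∧
    ∫ t in Set.Ioi 0, g t = (2 : ℝ) • ∫ t in Set.Ioi 1, g t := by
  have hsymm := (eqOn_inv_sq_smul_comp_inv hg).mono (Set.Ioi_subset_Ioi zero_le_one)
  have hhalves : ∫ t in Set.Ioc 0 1, g t = ∫ t in Set.Ioi 1, g t := by
    rw [integral_Ioc_eq_integral_Ioo, integral_Ioo_zero_one_eq_integral_Ioi_one_comp_inv,
      setIntegral_congr_fun measurableSet_Ioi hsymm]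
  have hint' : IntegrableOn g (Set.Ioi 1) :=
    ((integrableOn_Ioo_zero_one_iff_comp_inv g).mp
      (hint.mono_set Set.Ioo_subset_Ioc_self)).congr_fun hsymm measurableSet_Ioi
  have hsplit : ∫ t in Set.Ioi 0, g t = (∫ t in Set.Ioc 0 1, g t) + ∫ t in Set.Ioi 1, g t := by
    rw [← setIntegral_union (Set.Ioc_disjoint_Ioi le_rfl) measurableSet_Ioi hint hint',
      Set.Ioc_union_Ioi_eq_Ioi zero_le_one]
  rw [intervalIntegral.integral_of_le zero_le_one, hsplit, ← hhalves, two_smul]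
  exact ⟨rfl, rfl⟩

end InvSymmetric

theorem stmt_8 (d : ℕ) (hd : 2 ≤ d) :
    (∫ t in Set.Ioi (0 : ℝ), f d t) = 2 * ∫ t in (0 : ℝ)..(1 : ℝ), f d t ∧
    (∫ t in Set.Ioi (0 : ℝ), f d t) = 2 * ∫ t in Set.Ioi (1 : ℝ), f d t := by
  have hpos : 0 < d := by omega
  simpa using integral_Ioi_zero_eq_two_smul_of_inv (fun t ht => by simpa using f_inv hpos ht)
    ((continuous_f hpos).integrableOn_Icc.mono_set Set.Ioc_subset_Icc_self)
end

section
/- Let d ≥ 2 be an integer and suppose r_1, …, r_{d−1} are positive real numbers such that M_d(t) = Π_{i=1}^{d−1} (t² + r_i) for all real t. Then for every real t ≥ 0, (2π f_d(t))² = Σ_{i=1}^{d−1} 4 r_i/(t² + r_i)². -/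
open Finset MeasureTheory

open Polynomial

/-! Put `x = t²` and `m(x) = ∑ C(d-1,k)² xᵏ = ∏ (x + rᵢ)`. Then `M = m(x)`, `B = t m'(x)` and
`A = (x m')'(x)`, so `A M - B² = m (x m')' - x m'²`. Divided by `m²` this is the derivative of
`x m'/m = ∑ x/(x + rᵢ)`, namely `∑ rᵢ/(x + rᵢ)²`, while `(2π f)² = 4 (A M - B²)/M²`. -/

section EulerDefect

variable {R : Type*} [CommRing R]

/-- `p² · (X p'/p)'`, cleared of denominators; divided by `p²` it is additive over products,
because `X p'/p` is. -/
noncomputable def eulerDefect (p : R[X]) : R[X] :=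
  p * derivative (X * derivative p) - X * derivative p ^ 2

theorem eulerDefect_mul (p q : R[X]) :
    eulerDefect (p * q) = eulerDefect p * q ^ 2 + eulerDefect q * p ^ 2 := by
  simp only [eulerDefect, derivative_mul, derivative_add, derivative_X, one_mul]
  ring

theorem eulerDefect_X_add_C (r : R) : eulerDefect (X + C r) = C r := by
  simp only [eulerDefect, derivative_add, derivative_X, derivative_C, add_zero, mul_one, one_pow]
  ring

theorem eval_eulerDefect_prod {K ι : Type*} [Field K] (s : Finset ι) (p : ι → K[X]) (x : K)
    (hp : ∀ i ∈ s, (p i).eval x ≠ 0) :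
    (eulerDefect (∏ i ∈ s, p i)).eval x =
      ((∏ i ∈ s, p i).eval x) ^ 2 * ∑ i ∈ s, (eulerDefect (p i)).eval x / (p i).eval x ^ 2 := by
  classical
  induction s using Finset.induction_on with
  | empty => simp [eulerDefect]
  | insert a s ha ih =>
    have hpa := hp a (mem_insert_self a s)
    rw [prod_insert ha, sum_insert ha, eulerDefect_mul]
    simp only [eval_add, eval_mul, eval_pow]
    rw [ih fun i hi => hp i (mem_insert_of_mem hi)]
    field_simp

end EulerDefect

theorem sum_Icc_one_pred_eq_sum_range {β : Type*} [AddCommMonoid β] (d : ℕ) {g : ℕ → β}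
    (h0 : g 0 = 0) : ∑ k ∈ Icc 1 (d - 1), g k = ∑ k ∈ range d, g k := by
  refine sum_subset (fun k hk => ?_) (fun k hk hk' => ?_)
  · simp only [mem_Icc, mem_range] at hk ⊢
    omega
  · obtain rfl : k = 0 := by simp only [mem_Icc, mem_range] at hk hk'; omega
    exact h0

noncomputable def binomSqPoly (d : ℕ) : ℝ[X] :=
  ∑ k ∈ range d, C (((d - 1).choose k : ℝ) ^ 2) * X ^ k

theorem M_eq_eval (d : ℕ) (t : ℝ) : M d t = (binomSqPoly d).eval (t ^ 2) := by
  simp [M, binomSqPoly, eval_finsetSum, pow_mul]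

theorem B_eq_eval (d : ℕ) (t : ℝ) : B d t = t * (derivative (binomSqPoly d)).eval (t ^ 2) := by
  rw [B, binomSqPoly, derivative_sum, eval_finsetSum, mul_sum,
    sum_Icc_one_pred_eq_sum_range d (by simp)]
  refine sum_congr rfl fun k _ => ?_
  rcases k with _ | k
  · simp
  simp only [derivative_C_mul_X_pow, eval_C_mul, eval_pow, eval_X, Nat.add_sub_cancel]
  rw [show 2 * (k + 1) - 1 = 2 * k + 1 by omega]
  push_cast
  ring

theorem A_eq_eval (d : ℕ) (t : ℝ) :
    A d t = (derivative (X * derivative (binomSqPoly d))).eval (t ^ 2) := by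
  rw [A, binomSqPoly, derivative_sum, mul_sum, derivative_sum, eval_finsetSum,
    sum_Icc_one_pred_eq_sum_range d (by simp)]
  refine sum_congr rfl fun k _ => ?_
  rcases k with _ | k
  · simp
  simp only [derivative_C_mul_X_pow, Nat.add_sub_cancel]
  rw [show X * (C _ * X ^ k) = C _ * X ^ (k + 1) by ring]
  simp only [derivative_C_mul_X_pow, eval_C_mul, eval_pow, eval_X, Nat.add_sub_cancel]
  push_cast
  ring

theorem A_mul_M_sub_B_sq (d : ℕ) (t : ℝ) :
    A d t * M d t - B d t ^ 2 = (eulerDefect (binomSqPoly d)).eval (t ^ 2) := by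
  rw [A_eq_eval, M_eq_eval, B_eq_eval, eulerDefect]
  simp only [eval_sub, eval_mul, eval_pow, eval_X]
  ring

theorem binomSqPoly_eq_prod {d : ℕ} {ι : Type*} [Fintype ι] (r : ι → ℝ)
    (hM : ∀ t : ℝ, M d t = ∏ i, (t ^ 2 + r i)) : binomSqPoly d = ∏ i, (X + C (r i)) := by
  refine eq_of_infinite_eval_eq _ _ (Set.Ici_infinite 0 |>.mono fun x (hx : 0 ≤ x) => ?_)
  have hMx := hM (Real.sqrt x)
  rw [M_eq_eval, Real.sq_sqrt hx] at hMx
  simp [hMx, eval_prod]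

theorem two_pi_mul_f_sq {d : ℕ} {t : ℝ} (h : 0 ≤ A d t * M d t - B d t ^ 2) :
    (2 * Real.pi * f d t) ^ 2 = 4 * (A d t * M d t - B d t ^ 2) / M d t ^ 2 := by
  rw [f]
  field_simp
  rw [Real.sq_sqrt h]
  ring

theorem stmt_15_general (d : ℕ) (r : Fin (d - 1) → ℝ) (hr : ∀ i, 0 < r i)
    (hM : ∀ t : ℝ, M d t = ∏ i, (t ^ 2 + r i)) (t : ℝ) :
    (2 * Real.pi * f d t) ^ 2 = ∑ i, 4 * r i / (t ^ 2 + r i) ^ 2 := by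
  have hpos (i) : 0 < t ^ 2 + r i := add_pos_of_nonneg_of_pos (sq_nonneg t) (hr i)
  have hdefect : A d t * M d t - B d t ^ 2 = M d t ^ 2 * ∑ i, r i / (t ^ 2 + r i) ^ 2 := by
    rw [A_mul_M_sub_B_sq, M_eq_eval, binomSqPoly_eq_prod r hM,
      eval_eulerDefect_prod _ _ _ fun i _ => by simpa using (hpos i).ne']
    simp [eulerDefect_X_add_C]
  have hnonneg : 0 ≤ A d t * M d t - B d t ^ 2 := by
    rw [hdefect]
    exact mul_nonneg (sq_nonneg _) (sum_nonneg fun i _ => div_nonneg (hr i).le (sq_nonneg _))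
  have hM_ne : M d t ^ 2 ≠ 0 := by
    rw [hM]
    exact pow_ne_zero 2 (prod_pos fun i _ => hpos i).ne'
  rw [two_pi_mul_f_sq hnonneg, hdefect, mul_left_comm, mul_div_cancel_left₀ _ hM_ne, mul_sum]
  simp only [mul_div_assoc]

theorem stmt_15 (d : ℕ) (hd : 2 ≤ d) (r : Fin (d - 1) → ℝ) (hr : ∀ i, 0 < r i)
    (hM : ∀ t : ℝ, M d t = ∏ i, (t ^ 2 + r i)) (t : ℝ) (ht : 0 ≤ t) :
    (2 * Real.pi * f d t) ^ 2 = ∑ i, 4 * r i / (t ^ 2 + r i) ^ 2 :=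
  stmt_15_general d r hr hM t
end
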